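/- arXiv:1012.2693 — 2 statements merged into one kernel-verified Lean document; each statement's English description precedes it below -/
import Mathlib

section
/- For every nontrivial connected graph G, rc(G) = 2 if and only if src(G) = 2. -/
namespace RC

variable {V : Type*}

/-- A walk is rainbow under edge coloring `c` if its edges receive pairwise distinct colors. -/
def IsRainbow {G : SimpleGraph V} (c : Sym2 V → ℕ) {u v : V} (p : G.Walk u v) : Prop :=
  (p.edges.map c).Nodup

/-- `c` is a rainbow coloring: every pair of vertices is joined by a rainbow path. -/
def IsRainbowColoring (G : SimpleGraph V) (c : Sym2 V → ℕ) : Prop :=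
  ∀ u v : V, ∃ p : G.Walk u v, p.IsPath ∧ IsRainbow c p

/-- `c` is a strong rainbow coloring: every pair of vertices is joined by a rainbow geodesic. -/
def IsStrongRainbowColoring (G : SimpleGraph V) (c : Sym2 V → ℕ) : Prop :=
  ∀ u v : V, ∃ p : G.Walk u v, p.IsPath ∧ p.length = G.dist u v ∧ IsRainbow c p

/-- `c` uses at most `k` colors (namely `0, …, k-1`) on the edges of `G`. -/
def UsesColors (G : SimpleGraph V) (c : Sym2 V → ℕ) (k : ℕ) : Prop :=
  ∀ e ∈ G.edgeSet, c e < k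

/-- The rainbow connection number `rc(G)`. -/
noncomputable def rc (G : SimpleGraph V) : ℕ :=
  sInf {k | ∃ c : Sym2 V → ℕ, UsesColors G c k ∧ IsRainbowColoring G c}

/-- The strong rainbow connection number `src(G)`. -/
noncomputable def src (G : SimpleGraph V) : ℕ :=
  sInf {k | ∃ c : Sym2 V → ℕ, UsesColors G c k ∧ IsStrongRainbowColoring G c}

/-- length bound for rainbow paths -/
lemma rainbow_length_le {G : SimpleGraph V} {c : Sym2 V → ℕ} {k : ℕ}
    (hc : UsesColors G c k) {u v : V} {p : G.Walk u v} (hr : IsRainbow c p) :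
    p.length ≤ k := by
  have h1 : (p.edges.map c).toFinset.card = (p.edges.map c).length :=
    List.toFinset_card_of_nodup hr
  have h2 : (p.edges.map c).toFinset ⊆ Finset.range k := by
    intro x hx
    simp only [List.mem_toFinset, List.mem_map] at hx
    obtain ⟨e, he, rfl⟩ := hx
    exact Finset.mem_range.mpr (hc e (p.edges_subset_edgeSet he))
  have := Finset.card_le_card h2
  rw [h1] at this
  simpa [p.length_edges] using this

lemma adj_geodesic {G : SimpleGraph V} (c : Sym2 V → ℕ) {u v : V} (h : G.Adj u v) :
    ∃ p : G.Walk u v, p.IsPath ∧ p.length = G.dist u v ∧ IsRainbow c p := by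
  refine ⟨SimpleGraph.Walk.cons h SimpleGraph.Walk.nil, by simp [h.ne], ?_, ?_⟩
  · simp [SimpleGraph.dist_eq_one_iff_adj.mpr h]
  · simp [IsRainbow]

lemma strong_to_weak {G : SimpleGraph V} {c : Sym2 V → ℕ}
    (h : IsStrongRainbowColoring G c) : IsRainbowColoring G c := by
  intro u v
  obtain ⟨p, hp, _, hr⟩ := h u v
  exact ⟨p, hp, hr⟩

lemma key_two {G : SimpleGraph V} (hG : G.Connected) {c : Sym2 V → ℕ}
    (hc : UsesColors G c 2) (h : IsRainbowColoring G c) : IsStrongRainbowColoring G c := by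
  intro u v
  rcases eq_or_ne u v with rfl | hne
  · exact ⟨SimpleGraph.Walk.nil, by simp, (hG.dist_eq_zero_iff.mpr rfl).symm, by simp [IsRainbow]⟩
  rcases em (G.Adj u v) with hadj | hadj
  · exact adj_geodesic c hadj
  obtain ⟨p, hp, hr⟩ := h u v
  have hlen : p.length ≤ 2 := rainbow_length_le hc hr
  have hd1 : G.dist u v ≠ 1 := fun h1 => hadj (SimpleGraph.dist_eq_one_iff_adj.mp h1)
  have hd0 : 0 < G.dist u v := hG.pos_dist_of_ne hne
  have hdle : G.dist u v ≤ p.length := SimpleGraph.dist_le p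
  have : G.dist u v = 2 := by omega
  exact ⟨p, hp, by omega, hr⟩

lemma one_mem_trans {G : SimpleGraph V} (hG : G.Connected) {c : Sym2 V → ℕ}
    (hc : UsesColors G c 1) (h : IsRainbowColoring G c) : IsStrongRainbowColoring G c := by
  intro u v
  rcases eq_or_ne u v with rfl | hne
  · exact ⟨SimpleGraph.Walk.nil, by simp, (hG.dist_eq_zero_iff.mpr rfl).symm, by simp [IsRainbow]⟩
  obtain ⟨p, hp, hr⟩ := h u v
  have hlen : p.length ≤ 1 := rainbow_length_le hc hr
  have hd0 : 0 < G.dist u v := hG.pos_dist_of_ne hne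
  have hdle : G.dist u v ≤ p.length := SimpleGraph.dist_le p
  exact ⟨p, hp, by omega, hr⟩

lemma zero_not_mem {G : SimpleGraph V} [Nontrivial V] (hG : G.Connected)
    {c : Sym2 V → ℕ} (hc : UsesColors G c 0) (h : IsRainbowColoring G c) : False := by
  obtain ⟨u, v, hne⟩ := exists_pair_ne V
  obtain ⟨p, hp, hr⟩ := h u v
  have hlen : p.length ≤ 0 := rainbow_length_le hc hr
  have hdle : G.dist u v ≤ p.length := SimpleGraph.dist_le p
  have hd0 : 0 < G.dist u v := hG.pos_dist_of_ne hne
  omega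

/-- For every nontrivial connected graph `G`, `rc(G) = 2` iff `src(G) = 2`. -/
theorem stmt_1 {V : Type*} [Fintype V] [Nontrivial V] (G : SimpleGraph V)
    (hG : G.Connected) : rc G = 2 ↔ src G = 2 := by
  set Sr := {k | ∃ c : Sym2 V → ℕ, UsesColors G c k ∧ IsRainbowColoring G c} with hSr
  set Ss := {k | ∃ c : Sym2 V → ℕ, UsesColors G c k ∧ IsStrongRainbowColoring G c} with hSs
  have hsub : Ss ⊆ Sr := fun k ⟨c, hc, h⟩ => ⟨c, hc, strong_to_weak h⟩
  have h0r : 0 ∉ Sr := fun ⟨c, hc, h⟩ => zero_not_mem hG hc h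
  have h0s : 0 ∉ Ss := fun hk => h0r (hsub hk)
  have h1 : 1 ∈ Sr ↔ 1 ∈ Ss :=
    ⟨fun ⟨c, hc, h⟩ => ⟨c, hc, one_mem_trans hG hc h⟩, fun hk => hsub hk⟩
  have h2 : 2 ∈ Sr ↔ 2 ∈ Ss :=
    ⟨fun ⟨c, hc, h⟩ => ⟨c, hc, key_two hG hc h⟩, fun hk => hsub hk⟩
  have hsInf : ∀ S : Set ℕ, 0 ∉ S → (sInf S = 2 ↔ 2 ∈ S ∧ 1 ∉ S) := by
    intro S h0 
    constructor
    · intro h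
      have hne : S.Nonempty := by
        by_contra hemp
        rw [Set.not_nonempty_iff_eq_empty] at hemp
        simp [hemp] at h
      exact ⟨h ▸ Nat.sInf_mem hne, fun h1 => by
        have := Nat.sInf_le h1; omega⟩
    · rintro ⟨h2, h1⟩
      have hle : sInf S ≤ 2 := Nat.sInf_le h2
      have hmem : sInf S ∈ S := Nat.sInf_mem ⟨2, h2⟩
      interval_cases h : sInf S <;> simp_all
  rw [rc, src, ← hSr, ← hSs, hsInf Sr h0r, hsInf Ss h0s, h1, h2]

end RC
end

section
/- Let 3 ≤ a ≤ b be integers, n = 3b(b−a+2), and let G be obtained from the n-cycle C_n: v_1,...,v_n plus two vertices v, w each adjacent to all cycle vertices, by attaching a path u_1,...,u_{a−1} with u_{a−1} identified with v. Then rc(G) = a. -/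
namespace RC

variable {V : Type*}

/-- Vertices of the construction: cycle vertices `Fin n`, pendant-path vertices
`u_1, …, u_{a-2}` (as `Fin (a-2)`, with `u_{j+1}` coded by `j`), and the two hubs
`v` (coded `true`, playing the role of `u_{a-1}`) and `w` (coded `false`). -/
abbrev ConV (a n : ℕ) := Fin n ⊕ (Fin (a - 2) ⊕ Bool)

/-- the cycle vertex `v_{i+1}` -/
abbrev cyc {a n : ℕ} (i : Fin n) : ConV a n := Sum.inl i
/-- the path vertex `u_{j+1}` -/
abbrev pth {a n : ℕ} (j : Fin (a - 2)) : ConV a n := Sum.inr (Sum.inl j)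
/-- the hub `v` (identified with `u_{a-1}`) -/
abbrev hubv (a n : ℕ) : ConV a n := Sum.inr (Sum.inr true)
/-- the hub `w` -/
abbrev hubw (a n : ℕ) : ConV a n := Sum.inr (Sum.inr false)

def conRel (a n : ℕ) : ConV a n → ConV a n → Prop := fun x y =>
  match x, y with
  | Sum.inl i, Sum.inl j => (i.val + 1) % n = j.val
  | Sum.inl _, Sum.inr (Sum.inr _) => True
  | Sum.inr (Sum.inl j), Sum.inr (Sum.inl j') => j.val + 1 = j'.val
  | Sum.inr (Sum.inl j), Sum.inr (Sum.inr b) => b = true ∧ j.val + 1 = a - 2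
  | _, _ => False

/-- The construction graph `G`: an `n`-cycle `v_1 … v_n`, hubs `v, w` adjacent to all
cycle vertices (but not to each other), and a pendant path `u_1, …, u_{a-1}` with
`u_{a-1} = v`. -/
def ConG (a n : ℕ) : SimpleGraph (ConV a n) := SimpleGraph.fromRel (conRel a n)

/-!
Every path from `u_1` to `w` runs down the pendant path to `v` and then through a cycle vertex,
so `u_1` and `w` are at distance `a` and a rainbow colouring needs at least `a` colours.
Conversely `a` colours suffice: give the pendant edge `u_t u_{t+1}` colour `t + 1`, every cycle
edge colour `2`, and the spokes at the cycle vertex `v_i` colours `i mod 2` towards `v` and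
`(i + 1) mod 2` towards `w`. Cycle vertices of different parity are joined by the rainbow path
through `v`; for equal parity, go through `v` to a cycle neighbour of the target first.
-/

open SimpleGraph

section Rainbow

variable {G : SimpleGraph V} {c : Sym2 V → ℕ} {k : ℕ} {u v : V}

lemma IsRainbow.reverse {p : G.Walk u v} (hp : IsRainbow c p) : IsRainbow c p.reverse := by
  unfold IsRainbow at *
  rwa [Walk.edges_reverse, List.map_reverse, List.nodup_reverse]

lemma exists_rainbow_path_comm (h : ∃ p : G.Walk u v, p.IsPath ∧ IsRainbow c p) :
    ∃ p : G.Walk v u, p.IsPath ∧ IsRainbow c p :=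
  let ⟨p, hp, hr⟩ := h
  ⟨p.reverse, hp.reverse, hr.reverse⟩

lemma IsRainbow.length_le (hc : UsesColors G c k) {p : G.Walk u v} (hp : IsRainbow c p) :
    p.length ≤ k := by
  have hsub : (p.edges.map c).toFinset ⊆ Finset.range k := by
    intro m hm
    obtain ⟨e, he, rfl⟩ := List.mem_map.mp (List.mem_toFinset.mp hm)
    exact Finset.mem_range.mpr (hc e (p.edges_subset_edgeSet he))
  calc p.length = (p.edges.map c).toFinset.card := by
        rw [List.toFinset_card_of_nodup hp, List.length_map, Walk.length_edges]
    _ ≤ k := (Finset.card_le_card hsub).trans_eq (Finset.card_range k)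

lemma rc_eq_of_le_length (hc : UsesColors G c k) (hrc : IsRainbowColoring G c)
    (hlen : ∀ p : G.Walk u v, k ≤ p.length) : rc G = k := by
  refine le_antisymm (Nat.sInf_le ⟨c, hc, hrc⟩) (le_csInf ⟨k, c, hc, hrc⟩ ?_)
  rintro m ⟨c', hc', hrc'⟩
  obtain ⟨p, -, hp⟩ := hrc' u v
  exact (hlen p).trans (hp.length_le hc')

lemma le_add_length_of_adj (f : V → ℕ) (hf : ∀ x y, G.Adj x y → f y ≤ f x + 1)
    (p : G.Walk u v) : f v ≤ f u + p.length := by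
  induction p with
  | nil => simp
  | cons h q ih =>
    have := hf _ _ h
    rw [Walk.length_cons]
    omega

lemma isPath_of_nodup_map_support {α : Type*} (f : V → α) {p : G.Walk u v}
    (h : (p.support.map f).Nodup) : p.IsPath :=
  Walk.IsPath.mk' (h.of_map f)

end Rainbow

section Construction

variable {a n : ℕ}

/-- `level a n x` is the distance from `u_1` to `x`. -/
def level (a n : ℕ) : ConV a n → ℕ
  | Sum.inl _ => a - 1
  | Sum.inr (Sum.inl j) => j.val
  | Sum.inr (Sum.inr true) => a - 2
  | Sum.inr (Sum.inr false) => a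

/-- `pendant a n t` is `u_{t+1}`; for `t = a - 2` it is the hub `v`. -/
def pendant (a n t : ℕ) : ConV a n :=
  if h : t < a - 2 then pth ⟨t, h⟩ else hubv a n

lemma pendant_sub_two : pendant a n (a - 2) = hubv a n := by
  simp [pendant]

lemma level_pendant {t : ℕ} (ht : t ≤ a - 2) : level a n (pendant a n t) = t := by
  unfold pendant
  split_ifs <;> simp only [level]; omega

lemma exists_eq_cyc_or_pendant_or_hubw (x : ConV a n) :
    (∃ i, x = cyc i) ∨ (∃ t ≤ a - 2, x = pendant a n t) ∨ x = hubw a n := by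
  rcases x with i | j | (_ | _)
  · exact Or.inl ⟨i, rfl⟩
  · exact Or.inr (Or.inl ⟨j.val, j.isLt.le, by simp [pendant, j.isLt]⟩)
  · exact Or.inr (Or.inr rfl)
  · exact Or.inr (Or.inl ⟨a - 2, le_rfl, pendant_sub_two.symm⟩)

lemma level_le_succ_of_adj {x y : ConV a n} (h : (ConG a n).Adj x y) :
    level a n y ≤ level a n x + 1 := by
  rw [ConG, fromRel_adj] at h
  rcases x with i | j | (_ | _) <;> rcases y with i' | j' | (_ | _) <;>
    simp [conRel, level] at h ⊢ <;> omega

lemma adj_cyc_hubv (i : Fin n) : (ConG a n).Adj (cyc i) (hubv a n) := by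
  simp [ConG, conRel]

lemma adj_cyc_hubw (i : Fin n) : (ConG a n).Adj (cyc i) (hubw a n) := by
  simp [ConG, conRel]

lemma adj_pendant_succ {t : ℕ} (ht : t + 1 ≤ a - 2) :
    (ConG a n).Adj (pendant a n t) (pendant a n (t + 1)) := by
  unfold pendant
  split_ifs <;> simp [ConG, conRel, Fin.ext_iff] <;> omega

lemma exists_adj_cyc_parity_ne (hn : 2 ≤ n) (j : Fin n) :
    ∃ k : Fin n, (ConG a n).Adj (cyc k) (cyc j) ∧ k.val % 2 ≠ j.val % 2 := by
  by_cases hjn : j.val + 1 < n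
  · refine ⟨⟨j.val + 1, hjn⟩, ?_, by simp only; omega⟩
    simp [ConG, conRel, Fin.ext_iff, Nat.mod_eq_of_lt hjn]
  · have hj : j.val = n - 1 := by omega
    refine ⟨⟨n - 2, by omega⟩, ?_, by simp only; omega⟩
    have hmod : (n - 2 + 1) % n = n - 1 := by
      rw [Nat.mod_eq_of_lt (by omega : n - 2 + 1 < n)]
      omega
    simp [ConG, conRel, Fin.ext_iff, hj, hmod]
    omega

/-- On the pendant edge `u_t u_{t+1}` the last clause gives `t + 1`. -/
def conColorFn (a n : ℕ) : ConV a n → ConV a n → ℕ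
  | Sum.inl _, Sum.inl _ => 2
  | Sum.inl i, Sum.inr (Sum.inr true) | Sum.inr (Sum.inr true), Sum.inl i => i.val % 2
  | Sum.inl i, Sum.inr (Sum.inr false) | Sum.inr (Sum.inr false), Sum.inl i => (i.val + 1) % 2
  | x, y => max (level a n x) (level a n y) + 1

lemma conColorFn_comm (x y : ConV a n) : conColorFn a n x y = conColorFn a n y x := by
  rcases x with i | j | (_ | _) <;> rcases y with i' | j' | (_ | _) <;> simp [conColorFn, max_comm]

def conColoring (a n : ℕ) : Sym2 (ConV a n) → ℕ :=
  Sym2.lift ⟨conColorFn a n, conColorFn_comm⟩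

@[simp] lemma conColoring_mk (x y : ConV a n) : conColoring a n s(x, y) = conColorFn a n x y := rfl

lemma conColoring_pendant_succ {t : ℕ} (ht : t + 1 ≤ a - 2) :
    conColoring a n s(pendant a n t, pendant a n (t + 1)) = t + 2 := by
  unfold pendant
  split_ifs <;> simp [conColorFn, level] <;> omega

/- Walks on the pendant side are certified by their lists of levels and of colours: distinct
levels make a path, distinct colours a rainbow walk. -/
lemma exists_pendant_walk {t s : ℕ} (hts : t ≤ s) (hs : s ≤ a - 2) :
    ∃ p : (ConG a n).Walk (pendant a n t) (pendant a n s),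
      p.support.map (level a n) = List.range' t (s - t + 1) ∧
      p.edges.map (conColoring a n) = List.range' (t + 2) (s - t) := by
  obtain ⟨d, rfl⟩ := Nat.exists_eq_add_of_le hts
  rw [Nat.add_sub_cancel_left]
  clear hts
  induction d generalizing t with
  | zero => exact ⟨Walk.nil, by simp [level_pendant (show t ≤ a - 2 by omega)], rfl⟩
  | succ d ih =>
    obtain ⟨p, hsupp, hedges⟩ := ih (t := t + 1) (by omega)
    rw [show t + (d + 1) = t + 1 + d by omega]
    refine ⟨Walk.cons (adj_pendant_succ (by omega)) p, ?_, ?_⟩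
    · rw [Walk.support_cons, List.map_cons, hsupp, level_pendant (by omega)]
      exact (List.range'_succ ..).symm
    · rw [Walk.edges_cons, List.map_cons, hedges, conColoring_pendant_succ (by omega),
        List.range'_succ]

lemma exists_walk_cyc_pendant (i : Fin n) {t : ℕ} (ht : t ≤ a - 2) :
    ∃ p : (ConG a n).Walk (cyc i) (pendant a n t),
      p.support.map (level a n) = (a - 1) :: (List.range' t (a - 2 - t + 1)).reverse ∧
      p.edges.map (conColoring a n) = i.val % 2 :: (List.range' (t + 2) (a - 2 - t)).reverse := by
  obtain ⟨p, hsupp, hedges⟩ := exists_pendant_walk (n := n) ht le_rfl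
  have hadj : (ConG a n).Adj (cyc i) (pendant a n (a - 2)) := pendant_sub_two ▸ adj_cyc_hubv i
  refine ⟨Walk.cons hadj p.reverse, ?_, ?_⟩
  · simp [Walk.support_reverse, hsupp, level]
  · simp [Walk.edges_reverse, hedges, pendant_sub_two, conColorFn]

lemma exists_rainbow_path_cyc_pendant (ha : 2 ≤ a) (i : Fin n) {t : ℕ} (ht : t ≤ a - 2) :
    ∃ p : (ConG a n).Walk (cyc i) (pendant a n t),
      p.IsPath ∧ IsRainbow (conColoring a n) p := by
  obtain ⟨p, hsupp, hedges⟩ := exists_walk_cyc_pendant i ht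
  refine ⟨p, isPath_of_nodup_map_support (level a n) ?_, ?_⟩
  · rw [hsupp]
    simp [List.nodup_range']
    omega
  · unfold IsRainbow
    rw [hedges]
    simp [List.nodup_range']
    omega

lemma exists_rainbow_path_hubw_pendant (ha : 2 ≤ a) (hn : 0 < n) {t : ℕ} (ht : t ≤ a - 2) :
    ∃ p : (ConG a n).Walk (hubw a n) (pendant a n t),
      p.IsPath ∧ IsRainbow (conColoring a n) p := by
  obtain ⟨p, hsupp, hedges⟩ := exists_walk_cyc_pendant ⟨0, hn⟩ ht
  refine ⟨Walk.cons (adj_cyc_hubw _).symm p, isPath_of_nodup_map_support (level a n) ?_, ?_⟩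
  · rw [Walk.support_cons, List.map_cons, hsupp]
    simp [List.nodup_range', level]
    omega
  · unfold IsRainbow
    rw [Walk.edges_cons, List.map_cons, hedges]
    simp [List.nodup_range', conColorFn]

lemma exists_rainbow_path_pendant_pendant {t s : ℕ} (hts : t ≤ s) (hs : s ≤ a - 2) :
    ∃ p : (ConG a n).Walk (pendant a n t) (pendant a n s),
      p.IsPath ∧ IsRainbow (conColoring a n) p := by
  obtain ⟨p, hsupp, hedges⟩ := exists_pendant_walk (n := n) hts hs
  refine ⟨p, isPath_of_nodup_map_support (level a n) ?_, ?_⟩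
  · exact hsupp ▸ List.nodup_range'
  · exact show (p.edges.map _).Nodup from hedges ▸ List.nodup_range'

lemma exists_rainbow_path_cyc_cyc (i j : Fin n) :
    ∃ p : (ConG a n).Walk (cyc i) (cyc j),
      p.IsPath ∧ IsRainbow (conColoring a n) p := by
  rcases eq_or_ne i j with rfl | hij
  · exact ⟨Walk.nil, Walk.IsPath.nil, List.nodup_nil⟩
  have hij' := Fin.val_ne_of_ne hij
  by_cases hpar : i.val % 2 = j.val % 2
  · obtain ⟨k, hkj, hk⟩ := exists_adj_cyc_parity_ne (a := a) (by omega) j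
    refine ⟨.cons (adj_cyc_hubv i) (.cons (adj_cyc_hubv k).symm (.cons hkj .nil)), ?_, ?_⟩
    · have hkj' : k ≠ j := fun h => hkj.ne (h ▸ rfl)
      have hik : i ≠ k := fun h => hk (h ▸ hpar)
      simp [Walk.cons_isPath_iff, hkj', hik, hij]
    · simp [IsRainbow, conColorFn]
      omega
  · refine ⟨.cons (adj_cyc_hubv i) (.cons (adj_cyc_hubv j).symm .nil), ?_, ?_⟩
    · simp [Walk.cons_isPath_iff, hij]
    · simp [IsRainbow, conColorFn]
      omega

lemma isRainbowColoring_conColoring (ha : 2 ≤ a) (hn : 0 < n) :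
    IsRainbowColoring (ConG a n) (conColoring a n) := by
  intro x y
  rcases exists_eq_cyc_or_pendant_or_hubw x with ⟨i, rfl⟩ | ⟨t, ht, rfl⟩ | rfl <;>
    rcases exists_eq_cyc_or_pendant_or_hubw y with ⟨j, rfl⟩ | ⟨s, hs, rfl⟩ | rfl
  · exact exists_rainbow_path_cyc_cyc i j
  · exact exists_rainbow_path_cyc_pendant ha i hs
  · exact ⟨Walk.cons (adj_cyc_hubw i) Walk.nil, by simp, List.nodup_singleton _⟩
  · exact exists_rainbow_path_comm (exists_rainbow_path_cyc_pendant ha j ht)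
  · rcases le_total t s with hts | hst
    · exact exists_rainbow_path_pendant_pendant hts hs
    · exact exists_rainbow_path_comm (exists_rainbow_path_pendant_pendant hst ht)
  · exact exists_rainbow_path_comm (exists_rainbow_path_hubw_pendant ha hn ht)
  · exact ⟨Walk.cons (adj_cyc_hubw j).symm Walk.nil, by simp, List.nodup_singleton _⟩
  · exact exists_rainbow_path_hubw_pendant ha hn hs
  · exact ⟨Walk.nil, Walk.IsPath.nil, List.nodup_nil⟩

lemma usesColors_conColoring (ha : 3 ≤ a) : UsesColors (ConG a n) (conColoring a n) a := by
  intro e he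
  induction e using Sym2.ind with
  | _ x y =>
    rw [mem_edgeSet, ConG, fromRel_adj] at he
    rcases x with i | j | (_ | _) <;> rcases y with i' | j' | (_ | _) <;>
      simp [conRel, conColorFn, level] at he ⊢ <;> omega

lemma le_length_of_walk_pendant_zero_hubw (p : (ConG a n).Walk (pendant a n 0) (hubw a n)) :
    a ≤ p.length := by
  have := le_add_length_of_adj (level a n) (fun _ _ => level_le_succ_of_adj) p
  rwa [level_pendant (Nat.zero_le _), zero_add] at this

end Construction

/-- For `3 ≤ a ≤ b` and `n = 3b(b-a+2)`, the construction graph has `rc(G) = a`. -/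
theorem stmt_7 (a b : ℕ) (ha : 3 ≤ a) (hab : a ≤ b) :
    rc (ConG a (3 * b * (b - a + 2))) = a := by
  have hn : 0 < 3 * b * (b - a + 2) := Nat.mul_pos (by omega) (by omega)
  exact rc_eq_of_le_length (usesColors_conColoring ha)
    (isRainbowColoring_conColoring (by omega) hn)
    le_length_of_walk_pendant_zero_hubw

end RC
end
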